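/- arXiv:1706.05181 — 2 statements merged into one kernel-verified Lean document; each statement's English description precedes it below -/
import Mathlib

section
/- Let τ = Σ τ_i be a simplicial 2-cycle over Z/2 and let ≺ be any linear ordering τ_1 ≺ ... ≺ τ_n of its 2-simplices. For each ordered 4-tuple τ_i ≺ τ_j ≺ τ_k ≺ τ_l define η = (τ_i ∩ τ_k) ∪ (τ_j ∩ τ_l) if this union has exactly 4 vertices, and 0 otherwise, and set T_{(τ,≺)} = Σ η over all such 4-tuples (a 3-chain over Z/2). Then ∂ T_{(τ,≺)} = τ. -/
open Finset

/-- Z/2 boundary of a chain represented as a set of simplices. -/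
def bdry {V : Type} [DecidableEq V] (c : Finset (Finset V)) : Finset (Finset V) :=
  (c.sup Finset.powerset).filter fun τ =>
    Odd ((c.filter fun σ => τ ⊆ σ ∧ τ.card + 1 = σ.card).card)

def IsChainOf {V : Type} [DecidableEq V] (K : Finset (Finset V)) (d : ℕ)
    (c : Finset (Finset V)) : Prop :=
  ∀ σ ∈ c, σ ∈ K ∧ σ.card = d + 1

/-- Ordered 4-tuples `i < j < k < l` of indices such that
`(t i ∩ t k) ∪ (t j ∩ t l)` has exactly 4 vertices. -/
def quadSet {V : Type} [DecidableEq V] {m : ℕ} (t : Fin m → Finset V) :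
    Finset (Fin m × Fin m × Fin m × Fin m) :=
  Finset.univ.filter fun p =>
    p.1 < p.2.1 ∧ p.2.1 < p.2.2.1 ∧ p.2.2.1 < p.2.2.2 ∧
      ((t p.1 ∩ t p.2.2.1) ∪ (t p.2.1 ∩ t p.2.2.2)).card = 4

/-- The 3-simplex `η = (τ_i ∩ τ_k) ∪ (τ_j ∩ τ_l)` associated to an ordered 4-tuple. -/
def etaSimp {V : Type} [DecidableEq V] {m : ℕ} (t : Fin m → Finset V)
    (p : Fin m × Fin m × Fin m × Fin m) : Finset V :=
  (t p.1 ∩ t p.2.2.1) ∪ (t p.2.1 ∩ t p.2.2.2)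

/-- The 3-chain `T_{(τ,≺)}` over `Z/2`: the set of 3-simplices `η` arising from an odd
number of ordered 4-tuples. -/
def Tchain {V : Type} [DecidableEq V] {m : ℕ} (t : Fin m → Finset V) :
    Finset (Finset V) :=
  ((quadSet t).image (etaSimp t)).filter fun η =>
    Odd (((quadSet t).filter fun p => etaSimp t p = η).card)

namespace Stmt14Aux

lemma cast1 (n : ℕ) : ((n : ZMod 2) = 1 ↔ Odd n) := by
  rw [Nat.odd_iff, ← ZMod.natCast_mod]
  have h2 : n % 2 = 0 ∨ n % 2 = 1 := Nat.mod_two_eq_zero_or_one n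
  rcases h2 with h | h <;> rw [h] <;> simp


lemma zmod2_mul_self : ∀ x : ZMod 2, x * x = x := by decide
lemma htwo : (2 : ZMod 2) = 0 := rfl

def S1 (n : ℕ) (f : ℕ → ZMod 2) : ZMod 2 := ∑ i ∈ range n, f i
def S2 (n : ℕ) (f g : ℕ → ZMod 2) : ZMod 2 := ∑ j ∈ range n, S1 j f * g j
def S3 (n : ℕ) (f g h : ℕ → ZMod 2) : ZMod 2 := ∑ k ∈ range n, S2 k f g * h k
def S4 (n : ℕ) (f g h e : ℕ → ZMod 2) : ZMod 2 := ∑ l ∈ range n, S3 l f g h * e l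

lemma S1succ (n f) : S1 (n+1) f = S1 n f + f n := Finset.sum_range_succ f n
lemma S2succ (n f g) : S2 (n+1) f g = S2 n f g + S1 n f * g n := Finset.sum_range_succ _ n
lemma S3succ (n f g h) : S3 (n+1) f g h = S3 n f g h + S2 n f g * h n := Finset.sum_range_succ _ n
lemma S4succ (n f g h e) : S4 (n+1) f g h e = S4 n f g h e + S3 n f g h * e n := Finset.sum_range_succ _ n

lemma idA (f g : ℕ → ZMod 2) (hd : ∀ x, f x * g x = 0) (n : ℕ) :
    S2 n f g + S2 n g f = S1 n f * S1 n g := by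
  induction n with
  | zero => simp [S1, S2]
  | succ n ih =>
    rw [S1succ, S1succ, S2succ, S2succ]
    linear_combination ih - hd n

lemma idB (f g : ℕ → ZMod 2) (hd : ∀ x, f x * g x = 0) (n : ℕ) :
    S3 n f g f = S1 n f * S2 n g f + S2 n g f := by
  induction n with
  | zero => simp [S1, S2, S3]
  | succ n ih =>
    rw [S1succ, S2succ, S3succ]
    linear_combination ih + f n * (idA f g hd n) - S1 n g * zmod2_mul_self (f n)
      - (f n * S2 n g f + f n * S1 n g) * htwo

lemma idC (f g : ℕ → ZMod 2) (hd : ∀ x, f x * g x = 0) (n : ℕ) :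
    S3 n g f g = S1 n g * S2 n f g + S2 n f g := by
  induction n with
  | zero => simp [S1, S2, S3]
  | succ n ih =>
    rw [S1succ, S2succ, S3succ]
    linear_combination ih + g n * (idA f g hd n) - S1 n f * zmod2_mul_self (g n)
      - (g n * S2 n f g + g n * S1 n f) * htwo

lemma idD (f g : ℕ → ZMod 2) (hd : ∀ x, f x * g x = 0) (n : ℕ) :
    S4 n f g f g + S4 n g f g f = S2 n f g * S2 n g f + S3 n f g f + S3 n g f g := by
  induction n with
  | zero => simp [S1, S2, S3, S4]
  | succ n ih =>
    rw [S2succ, S2succ, S3succ, S3succ, S4succ, S4succ]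
    linear_combination ih + g n * (idB f g hd n) + f n * (idC f g hd n) +
      S1 n f * S1 n g * hd n - g n * f n * S1 n f * S1 n g * htwo

lemma lemmaX (f g : ℕ → ZMod 2) (hd : ∀ x, f x * g x = 0) (n : ℕ)
    (ha : S1 n f = 0) (hb : S1 n g = 0) :
    S4 n f g f g + S4 n g f g f = S2 n f g := by
  have hA := idA f g hd n
  have hB := idB f g hd n
  have hC := idC f g hd n
  have hD := idD f g hd n
  rw [ha] at hA hB
  rw [hb] at hC
  rw [hD, hB, hC]
  have h2 : S2 n g f = S2 n f g := by linear_combination hA - S2 n f g * htwo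
  rw [h2]
  linear_combination zmod2_mul_self (S2 n f g) + S2 n f g * htwo


lemma sum_range_ite (M l : ℕ) (h : l ≤ M) (g : ℕ → ZMod 2) :
    (∑ x ∈ range M, if x < l then g x else 0) = ∑ x ∈ range l, g x := by
  rw [← Finset.sum_filter]
  congr 1
  ext x
  simp only [mem_filter, mem_range]
  omega

lemma rev4 (s : Finset ℕ) (F : ℕ → ℕ → ℕ → ℕ → ZMod 2) :
    (∑ i ∈ s, ∑ j ∈ s, ∑ k ∈ s, ∑ l ∈ s, F i j k l)
      = ∑ l ∈ s, ∑ k ∈ s, ∑ j ∈ s, ∑ i ∈ s, F i j k l := by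
  have h1 : ∀ (A : ℕ → ℕ → ZMod 2), (∑ i ∈ s, ∑ j ∈ s, A i j) = ∑ j ∈ s, ∑ i ∈ s, A i j :=
    fun A => Finset.sum_comm
  calc (∑ i ∈ s, ∑ j ∈ s, ∑ k ∈ s, ∑ l ∈ s, F i j k l)
      = ∑ i ∈ s, ∑ j ∈ s, ∑ l ∈ s, ∑ k ∈ s, F i j k l := by
        exact Finset.sum_congr rfl fun i _ => Finset.sum_congr rfl fun j _ => h1 _
    _ = ∑ i ∈ s, ∑ l ∈ s, ∑ j ∈ s, ∑ k ∈ s, F i j k l := by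
        exact Finset.sum_congr rfl fun i _ => h1 _
    _ = ∑ l ∈ s, ∑ i ∈ s, ∑ j ∈ s, ∑ k ∈ s, F i j k l := h1 _
    _ = ∑ l ∈ s, ∑ i ∈ s, ∑ k ∈ s, ∑ j ∈ s, F i j k l := by
        exact Finset.sum_congr rfl fun l _ => Finset.sum_congr rfl fun i _ => h1 _
    _ = ∑ l ∈ s, ∑ k ∈ s, ∑ i ∈ s, ∑ j ∈ s, F i j k l := by
        exact Finset.sum_congr rfl fun l _ => h1 _
    _ = ∑ l ∈ s, ∑ k ∈ s, ∑ j ∈ s, ∑ i ∈ s, F i j k l := by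
        exact Finset.sum_congr rfl fun l _ => Finset.sum_congr rfl fun k _ => h1 _

lemma nest2 (m : ℕ) (Ψ : ℕ → ℕ → ZMod 2) :
    (∑ a ∈ range m, ∑ b ∈ range m, if a < b then Ψ a b else 0)
      = ∑ b ∈ range m, ∑ a ∈ range b, Ψ a b := by
  rw [Finset.sum_comm]
  refine Finset.sum_congr rfl fun b hb => ?_
  exact sum_range_ite m b (le_of_lt (mem_range.mp hb)) _

lemma nest4 (m : ℕ) (Φ : ℕ → ℕ → ℕ → ℕ → ZMod 2) :
    (∑ i ∈ range m, ∑ j ∈ range m, ∑ k ∈ range m, ∑ l ∈ range m,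
        if i < j ∧ j < k ∧ k < l then Φ i j k l else 0)
      = ∑ l ∈ range m, ∑ k ∈ range l, ∑ j ∈ range k, ∑ i ∈ range j, Φ i j k l := by
  rw [rev4]
  refine Finset.sum_congr rfl fun l hl => ?_
  have hlm := mem_range.mp hl
  calc (∑ k ∈ range m, ∑ j ∈ range m, ∑ i ∈ range m,
          if i < j ∧ j < k ∧ k < l then Φ i j k l else 0)
      = ∑ k ∈ range m, if k < l then (∑ j ∈ range m, ∑ i ∈ range m,
          if i < j ∧ j < k then Φ i j k l else 0) else 0 := by
        refine Finset.sum_congr rfl fun k _ => ?_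
        by_cases hkl : k < l
        · simp only [hkl, if_true]
          refine Finset.sum_congr rfl fun j _ => Finset.sum_congr rfl fun i _ => ?_
          by_cases h : i < j ∧ j < k <;> simp [h, hkl] <;> tauto
        · simp only [hkl, if_false]
          refine Finset.sum_eq_zero fun j _ => Finset.sum_eq_zero fun i _ => ?_
          simp [hkl]
    _ = ∑ k ∈ range l, ∑ j ∈ range m, ∑ i ∈ range m,
          if i < j ∧ j < k then Φ i j k l else 0 := sum_range_ite m l (le_of_lt hlm) _
    _ = ∑ k ∈ range l, ∑ j ∈ range k, ∑ i ∈ range j, Φ i j k l := by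
        refine Finset.sum_congr rfl fun k hk => ?_
        have hkm : k < m := lt_trans (mem_range.mp hk) hlm
        calc (∑ j ∈ range m, ∑ i ∈ range m, if i < j ∧ j < k then Φ i j k l else 0)
            = ∑ j ∈ range m, if j < k then (∑ i ∈ range m,
                if i < j then Φ i j k l else 0) else 0 := by
              refine Finset.sum_congr rfl fun j _ => ?_
              by_cases hjk : j < k
              · simp only [hjk, if_true]
                refine Finset.sum_congr rfl fun i _ => ?_
                by_cases h : i < j <;> simp [h, hjk]
              · simp only [hjk, if_false]
                refine Finset.sum_eq_zero fun i _ => ?_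
                simp [hjk]
          _ = ∑ j ∈ range k, ∑ i ∈ range m, if i < j then Φ i j k l else 0 :=
              sum_range_ite m k (le_of_lt hkm) _
          _ = ∑ j ∈ range k, ∑ i ∈ range j, Φ i j k l := by
              refine Finset.sum_congr rfl fun j hj => ?_
              have hjm : j < m := lt_trans (mem_range.mp hj) hkm
              exact sum_range_ite m j (le_of_lt hjm) _


variable {V : Type} [DecidableEq V]

lemma ib_mul (P Q : Prop) [Decidable P] [Decidable Q] :
    (if P then (1:ZMod 2) else 0) * (if Q then 1 else 0) = if P ∧ Q then 1 else 0 := by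
  by_cases hP : P <;> by_cases hQ : Q <;> simp [hP, hQ]

-- intersection of two distinct card-3 sets has card ≤ 2
lemma inter_card_le_two (X Y : Finset V) (hX : X.card = 3) (hY : Y.card = 3) (hne : X ≠ Y) :
    (X ∩ Y).card ≤ 2 := by
  by_contra h
  push_neg at h
  have hsub : X ∩ Y ⊆ X := inter_subset_left
  have hle : (X ∩ Y).card ≤ 3 := hX ▸ card_le_card hsub
  have h3 : (X ∩ Y).card = 3 := by omega
  have e1 : X ∩ Y = X := eq_of_subset_of_card_le hsub (by omega)
  have e2 : X ∩ Y = Y := eq_of_subset_of_card_le inter_subset_right (by omega)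
  exact hne (e1.symm.trans e2)

lemma pair_eq_inter (X Y : Finset V) (hX : X.card = 3) (hY : Y.card = 3) (hne : X ≠ Y)
    (u v : V) (huv : u ≠ v) :
    (insert u {v} ⊆ X ∧ insert u {v} ⊆ Y) ↔ X ∩ Y = insert u {v} := by
  constructor
  · rintro ⟨hx, hy⟩
    have hsub : insert u {v} ⊆ X ∩ Y := subset_inter hx hy
    have hcard : ({u, v} : Finset V).card = 2 := Finset.card_pair huv
    exact (eq_of_subset_of_card_le hsub
      ((inter_card_le_two X Y hX hY hne).trans_eq hcard.symm)).symm
  · intro h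
    rw [← h]
    exact ⟨inter_subset_left, inter_subset_right⟩

lemma erase_eq_inter (σ X Y : Finset V) (hσ : σ.card = 3) (hX : X.card = 3) (hY : Y.card = 3)
    (hne : X ≠ Y) (u : V) (hu : u ∈ σ) :
    (σ.erase u ⊆ X ∧ σ.erase u ⊆ Y) ↔ X ∩ Y = σ.erase u := by
  have hcard : (σ.erase u).card = 2 := by rw [card_erase_of_mem hu, hσ]
  constructor
  · rintro ⟨hx, hy⟩
    have hsub : σ.erase u ⊆ X ∩ Y := subset_inter hx hy
    exact (eq_of_subset_of_card_le hsub
      ((inter_card_le_two X Y hX hY hne).trans_eq hcard.symm)).symm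
  · intro h
    rw [← h]
    exact ⟨inter_subset_left, inter_subset_right⟩


lemma half_sum (σ W : Finset V) (hσ : σ.card = 3) (e1 e2 : Finset V)
    (hce1 : e1.card = 2) (hce2 : e2.card = 2) (hdisj : e1 ∩ e2 = ∅)
    (v0 : V) (hv0σ : v0 ∉ σ) (hunion : e1 ∪ e2 = insert v0 σ)
    (hv0e : v0 ∈ e1) (hW : e1 ⊆ W) :
    (∑ u ∈ σ, ∑ v ∈ W \ σ,
        ((if e1 = insert u {v} ∧ e2 = σ.erase u then (1:ZMod 2) else 0)
          + (if e2 = insert u {v} ∧ e1 = σ.erase u then 1 else 0))) = 1 := by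
  -- the partner u0 of v0 in e1
  have hcarderase : (e1.erase v0).card = 1 := by rw [card_erase_of_mem hv0e, hce1]
  obtain ⟨u0, hu0⟩ := card_eq_one.mp hcarderase
  have hu0e1 : u0 ∈ e1.erase v0 := hu0 ▸ mem_singleton_self u0
  have hu0v0 : u0 ≠ v0 := ne_of_mem_erase hu0e1
  have hu0e1' : u0 ∈ e1 := mem_of_mem_erase hu0e1
  have he1pair : e1 = insert u0 {v0} := by
    rw [← insert_erase hv0e, hu0, Finset.pair_comm]
  have hu0σ : u0 ∈ σ := by
    have : u0 ∈ e1 ∪ e2 := mem_union_left _ hu0e1'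
    rw [hunion] at this
    rcases mem_insert.mp this with h | h
    · exact absurd h hu0v0
    · exact h
  have hv0e2 : v0 ∉ e2 := by
    intro h
    have : v0 ∈ e1 ∩ e2 := mem_inter.mpr ⟨hv0e, h⟩
    rw [hdisj] at this; exact notMem_empty _ this
  have hu0e2 : u0 ∉ e2 := by
    intro h
    have : u0 ∈ e1 ∩ e2 := mem_inter.mpr ⟨hu0e1', h⟩
    rw [hdisj] at this; exact notMem_empty _ this
  have he2erase : e2 = σ.erase u0 := by
    apply eq_of_subset_of_card_le
    · intro x hx
      have hx' : x ∈ e1 ∪ e2 := mem_union_right _ hx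
      rw [hunion] at hx'
      rcases mem_insert.mp hx' with h | h
      · exact absurd (h ▸ hx) hv0e2
      · refine mem_erase.mpr ⟨fun hxe => ?_, h⟩
        exact hu0e2 (hxe ▸ hx)
    · rw [card_erase_of_mem hu0σ, hσ, hce2]
  have hv0W : v0 ∈ W \ σ := mem_sdiff.mpr ⟨hW hv0e, hv0σ⟩
  rw [Finset.sum_eq_single_of_mem u0 hu0σ]
  · rw [Finset.sum_eq_single_of_mem v0 hv0W]
    · rw [if_pos ⟨he1pair, he2erase⟩, if_neg, add_zero]
      rintro ⟨ha, _⟩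
      exact hv0e2 (ha ▸ (mem_insert_of_mem (mem_singleton_self v0)))
    · intro v hv hvne
      have hvσ : v ∉ σ := (mem_sdiff.mp hv).2
      rw [if_neg, if_neg, add_zero]
      · rintro ⟨ha, _⟩
        have : v ∈ e2 := ha ▸ (mem_insert_of_mem (mem_singleton_self v))
        rw [he2erase] at this
        exact hvσ (mem_of_mem_erase this)
      · rintro ⟨ha, _⟩
        have hve1 : v ∈ e1 := ha ▸ (mem_insert_of_mem (mem_singleton_self v))
        rw [he1pair] at hve1
        rcases mem_insert.mp hve1 with h | h
        · exact hvσ (h ▸ hu0σ)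
        · exact hvne (mem_singleton.mp h)
  · intro u hu hune
    apply Finset.sum_eq_zero
    intro v _
    rw [if_neg, if_neg, add_zero]
    · rintro ⟨_, hb⟩
      have h1 : v0 ∈ σ.erase u := hb ▸ hv0e
      exact hv0σ (mem_of_mem_erase h1)
    · rintro ⟨_, hb⟩
      have h1 : u ∈ σ.erase u0 := mem_erase.mpr ⟨hune, hu⟩
      rw [← he2erase, hb] at h1
      exact notMem_erase u σ h1

lemma pointwise_expand (σ W X1 X2 X3 X4 : Finset V) (hσ : σ.card = 3)
    (h1 : X1.card = 3) (h2 : X2.card = 3) (h3 : X3.card = 3) (h4 : X4.card = 3)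
    (h13 : X1 ≠ X3) (h24 : X2 ≠ X4) (hW1 : X1 ⊆ W) (hW2 : X2 ⊆ W) :
    (if ((X1 ∩ X3 ∪ X2 ∩ X4).card = 4 ∧ σ ⊆ X1 ∩ X3 ∪ X2 ∩ X4) then (1:ZMod 2) else 0)
      = ∑ u ∈ σ, ∑ v ∈ W \ σ,
          ((if X1 ∩ X3 = insert u {v} ∧ X2 ∩ X4 = σ.erase u then (1:ZMod 2) else 0)
            + (if X2 ∩ X4 = insert u {v} ∧ X1 ∩ X3 = σ.erase u then 1 else 0)) := by
  set e1 := X1 ∩ X3 with he1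
  set e2 := X2 ∩ X4 with he2
  by_cases hQ : (e1 ∪ e2).card = 4 ∧ σ ⊆ e1 ∪ e2
  · rw [if_pos hQ]
    obtain ⟨hc4, hσsub⟩ := hQ
    -- basic cards
    have hc1 : e1.card ≤ 2 := inter_card_le_two X1 X3 h1 h3 h13
    have hc2 : e2.card ≤ 2 := inter_card_le_two X2 X4 h2 h4 h24
    have hUle : (e1 ∪ e2).card + (e1 ∩ e2).card = e1.card + e2.card :=
      card_union_add_card_inter e1 e2
    have hce1 : e1.card = 2 := by omega
    have hce2 : e2.card = 2 := by omega
    have hdisj : (e1 ∩ e2).card = 0 := by omega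
    have hdisj' : e1 ∩ e2 = ∅ := card_eq_zero.mp hdisj
    -- the extra vertex
    have hsd : ((e1 ∪ e2) \ σ).card = 1 := by
      rw [card_sdiff_of_subset hσsub, hc4, hσ]
    obtain ⟨v0, hv0⟩ := card_eq_one.mp hsd
    have hv0mem : v0 ∈ e1 ∪ e2 := (mem_sdiff.mp (hv0 ▸ mem_singleton_self v0)).1
    have hv0σ : v0 ∉ σ := (mem_sdiff.mp (hv0 ▸ mem_singleton_self v0)).2
    have hunion : e1 ∪ e2 = insert v0 σ := by
      apply eq_of_subset_of_card_le
      · intro x hx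
        by_cases hxσ : x ∈ σ
        · exact mem_insert_of_mem hxσ
        · have : x ∈ (e1 ∪ e2) \ σ := mem_sdiff.mpr ⟨hx, hxσ⟩
          rw [hv0] at this
          simp only [mem_singleton] at this
          rw [this]; exact mem_insert_self _ _
      · rw [card_insert_of_notMem hv0σ, hσ, hc4]
    symm
    rcases mem_union.mp hv0mem with hv0e | hv0e
    · exact half_sum σ W hσ e1 e2 hce1 hce2 hdisj' v0 hv0σ hunion hv0e
        (inter_subset_left.trans hW1)
    · have hsum := half_sum σ W hσ e2 e1 hce2 hce1
        (by rw [inter_comm]; exact hdisj') v0 hv0σ (by rw [union_comm]; exact hunion) hv0e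
        (inter_subset_left.trans hW2)
      refine Eq.trans ?_ hsum
      refine Finset.sum_congr rfl fun u _ => Finset.sum_congr rfl fun v _ => add_comm
        (if e1 = insert u {v} ∧ e2 = σ.erase u then (1:ZMod 2) else 0)
        (if e2 = insert u {v} ∧ e1 = σ.erase u then (1:ZMod 2) else 0)
  · rw [if_neg hQ]
    symm
    apply Finset.sum_eq_zero
    intro u hu
    apply Finset.sum_eq_zero
    intro v hv
    have hvσ : v ∉ σ := (mem_sdiff.mp hv).2
    have key : ∀ (a b : Finset V), a = insert u {v} → b = σ.erase u → a ∪ b = insert v σ := by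
      intro a b ha hb
      rw [ha, hb]
      ext x
      simp only [mem_union, mem_insert, mem_singleton, mem_erase]
      constructor
      · rintro ((rfl | rfl) | ⟨hxu, hx⟩)
        · right; exact hu
        · left; rfl
        · right; exact hx
      · rintro (rfl | hx)
        · left; right; rfl
        · by_cases hxu : x = u
          · left; left; exact hxu
          · right; exact ⟨hxu, hx⟩
    have keycard : (insert v σ).card = 4 ∧ σ ⊆ insert v σ := by
      constructor
      · rw [card_insert_of_notMem hvσ, hσ]
      · exact subset_insert _ _
    rw [if_neg, if_neg, add_zero]
    · rintro ⟨ha, hb⟩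
      apply hQ
      rw [union_comm e1 e2, key e2 e1 ha hb]
      exact keycard
    · rintro ⟨ha, hb⟩
      refine hQ ?_
      rw [key e1 e2 ha hb]
      exact keycard


lemma cast0 (n : ℕ) : ((n : ZMod 2) = 0 ↔ Even n) := by
  rw [Nat.even_iff, ← ZMod.natCast_mod]
  have h2 : n % 2 = 0 ∨ n % 2 = 1 := Nat.mod_two_eq_zero_or_one n
  rcases h2 with h | h <;> rw [h] <;> simp


lemma sum_indicator_inter (σ X : Finset V) :
    (∑ u ∈ σ, if u ∈ X then (1:ZMod 2) else 0) = ((σ ∩ X).card : ZMod 2) := by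
  rw [← Finset.sum_filter]
  have : σ.filter (fun u => u ∈ X) = σ ∩ X := by
    ext x; simp [mem_filter]
  rw [this, Finset.sum_const, nsmul_eq_mul, mul_one]

-- missing-element extraction
lemma inter_two_erase (σ Y : Finset V) (hσ : σ.card = 3) (hc : (σ ∩ Y).card = 2) :
    ∃ w0 ∈ σ, σ ∩ Y = σ.erase w0 := by
  have hsub : σ ∩ Y ⊆ σ := inter_subset_left
  have h1 : (σ \ (σ ∩ Y)).card = 1 := by rw [card_sdiff_of_subset hsub, hσ, hc]
  obtain ⟨w0, hw0⟩ := card_eq_one.mp h1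
  have hw0mem : w0 ∈ σ \ (σ ∩ Y) := hw0 ▸ mem_singleton_self w0
  have hw0σ : w0 ∈ σ := (mem_sdiff.mp hw0mem).1
  have hw0n : w0 ∉ σ ∩ Y := (mem_sdiff.mp hw0mem).2
  refine ⟨w0, hw0σ, ?_⟩
  ext x
  simp only [mem_erase]
  constructor
  · intro hx
    exact ⟨fun h => hw0n (h ▸ hx), hsub hx⟩
  · rintro ⟨hxw, hxσ⟩
    by_contra hxn
    have : x ∈ σ \ (σ ∩ Y) := mem_sdiff.mpr ⟨hxσ, hxn⟩
    rw [hw0] at this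
    exact hxw (mem_singleton.mp this)

lemma erase_eq_erase_iff (σ : Finset V) (u w : V) (hu : u ∈ σ) :
    σ.erase u = σ.erase w ↔ u = w := by
  constructor
  · intro h
    by_contra hne
    have : u ∈ σ.erase w := mem_erase.mpr ⟨hne, hu⟩
    rw [← h] at this
    exact notMem_erase u σ this
  · rintro rfl; rfl

lemma step2 (σ X Y : Finset V) (hσ : σ.card = 3) (hX : X.card = 3) :
    (((X \ σ).card : ZMod 2)) *
        ∑ u ∈ σ, (if u ∈ X then (1:ZMod 2) else 0) * (if σ.erase u ⊆ Y then 1 else 0)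
      = ∑ u ∈ σ, ∑ w ∈ σ,
          if u ≠ w ∧ σ ∩ X = σ.erase u ∧ σ ∩ Y = σ.erase w then 1 else 0 := by
  have hcard_eraseσ : ∀ u ∈ σ, (σ.erase u).card = 2 := fun u hu => by
    rw [card_erase_of_mem hu, hσ]
  have hXsplit : (X \ σ).card + (X ∩ σ).card = 3 := by
    rw [Finset.card_sdiff_add_card_inter, hX]
  by_cases hYσ : σ ⊆ Y
  · -- RHS zero, LHS even product
    have hR : ∀ u ∈ σ, ∀ w ∈ σ, ¬(u ≠ w ∧ σ ∩ X = σ.erase u ∧ σ ∩ Y = σ.erase w) := by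
      rintro u hu w hw ⟨-, -, h2⟩
      have : σ ∩ Y = σ := inter_eq_left.mpr hYσ
      rw [this] at h2
      have := hcard_eraseσ w hw
      rw [← h2, hσ] at this
      omega
    rw [Finset.sum_congr rfl fun u hu => Finset.sum_congr rfl fun w hw =>
      if_neg (hR u hu w hw)]
    simp only [Finset.sum_const_zero]
    have hone : ∀ u ∈ σ, (if σ.erase u ⊆ Y then (1:ZMod 2) else 0) = 1 := fun u hu =>
      if_pos ((erase_subset u σ).trans hYσ)
    rw [Finset.sum_congr rfl fun u hu => by rw [hone u hu, mul_one]]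
    rw [sum_indicator_inter]
    have heven : Even ((X \ σ).card * (σ ∩ X).card) := by
      rw [inter_comm]
      rcases Nat.even_or_odd (X \ σ).card with h | h
      · exact h.mul_right _
      · have : Even ((X ∩ σ).card) := by
          rw [Nat.even_iff]; rw [Nat.odd_iff] at h; omega
        exact this.mul_left _
    have h0 : (((X \ σ).card * ((σ ∩ X).card) : ℕ) : ZMod 2) = 0 := (cast0 _).mpr heven
    push_cast at h0
    exact h0
  · by_cases hc : (σ ∩ Y).card = 2
    · obtain ⟨w0, hw0σ, hw0⟩ := inter_two_erase σ Y hσ hc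
      -- collapse erase-u-subset-Y indicator
      have hsubY : ∀ u ∈ σ, (σ.erase u ⊆ Y ↔ u = w0) := by
        intro u hu
        constructor
        · intro h
          have hsub2 : σ.erase u ⊆ σ ∩ Y := subset_inter (erase_subset u σ) h
          rw [hw0] at hsub2
          have heq : σ.erase u = σ.erase w0 := by
            apply eq_of_subset_of_card_le hsub2
            rw [hcard_eraseσ u hu, hcard_eraseσ w0 hw0σ]
          exact (erase_eq_erase_iff σ u w0 hu).mp heq
        · rintro rfl
          rw [← hw0]
          exact inter_subset_right
      have hYw : ∀ w ∈ σ, (σ ∩ Y = σ.erase w ↔ w = w0) := by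
        intro w hw
        rw [hw0]
        constructor
        · intro h
          exact ((erase_eq_erase_iff σ w0 w hw0σ).mp h).symm
        · rintro rfl; rfl
      -- LHS collapses at u = w0
      have hLHS : (∑ u ∈ σ, (if u ∈ X then (1:ZMod 2) else 0) * (if σ.erase u ⊆ Y then 1 else 0))
          = (if w0 ∈ X then 1 else 0) := by
        rw [Finset.sum_eq_single_of_mem w0 hw0σ]
        · rw [if_pos ((hsubY w0 hw0σ).mpr rfl), mul_one]
        · intro u hu hune
          rw [if_neg (fun h => hune ((hsubY u hu).mp h)), mul_zero]
      -- RHS collapses at w = w0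
      have hRHS : (∑ u ∈ σ, ∑ w ∈ σ,
            if u ≠ w ∧ σ ∩ X = σ.erase u ∧ σ ∩ Y = σ.erase w then (1:ZMod 2) else 0)
          = ∑ u ∈ σ, if u ≠ w0 ∧ σ ∩ X = σ.erase u then 1 else 0 := by
        refine Finset.sum_congr rfl fun u hu => ?_
        rw [Finset.sum_eq_single_of_mem w0 hw0σ]
        · by_cases h : u ≠ w0 ∧ σ ∩ X = σ.erase u
          · rw [if_pos ⟨h.1, h.2, (hYw w0 hw0σ).mpr rfl⟩, if_pos h]
          · rw [if_neg (fun hh => h ⟨hh.1, hh.2.1⟩), if_neg h]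
        · intro w hw hwne
          exact if_neg (fun hh => hwne ((hYw w hw).mp hh.2.2))
      rw [hLHS, hRHS]
      by_cases hw0X : w0 ∈ X
      · rw [if_pos hw0X]
        by_cases hcX : (σ ∩ X).card = 2
        · obtain ⟨u0, hu0σ, hu0⟩ := inter_two_erase σ X hσ hcX
          have hu0w0 : u0 ≠ w0 := by
            intro h
            have : w0 ∈ σ ∩ X := mem_inter.mpr ⟨hw0σ, hw0X⟩
            rw [hu0, h] at this
            exact notMem_erase w0 σ this
          have hXu : ∀ u ∈ σ, (σ ∩ X = σ.erase u ↔ u = u0) := by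
            intro u hu
            rw [hu0]
            constructor
            · intro h
              exact ((erase_eq_erase_iff σ u0 u hu0σ).mp h).symm
            · rintro rfl; rfl
          rw [Finset.sum_eq_single_of_mem u0 hu0σ]
          · rw [if_pos ⟨hu0w0, hu0⟩]
            have : (X \ σ).card = 1 := by
              have h2 : (X ∩ σ).card = 2 := by rw [inter_comm]; exact hcX
              omega
            rw [this]
            norm_num
          · intro u hu hune
            exact if_neg (fun hh => hune ((hXu u hu).mp hh.2))
        · -- no u with σ ∩ X = erase u; and |X∖σ| even
          have hRzero : (∑ u ∈ σ, if u ≠ w0 ∧ σ ∩ X = σ.erase u then (1:ZMod 2) else 0) = 0 := by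
            refine Finset.sum_eq_zero fun u hu => ?_
            refine if_neg fun hh => hcX ?_
            rw [hh.2, hcard_eraseσ u hu]
          rw [hRzero, mul_comm]
          have hXin : (X ∩ σ).card ≠ 0 := by
            intro h
            have : w0 ∈ X ∩ σ := mem_inter.mpr ⟨hw0X, hw0σ⟩
            rw [card_eq_zero.mp h] at this
            exact notMem_empty _ this
          have hXσc : (σ ∩ X).card = (X ∩ σ).card := by rw [inter_comm]
          have : Even ((X \ σ).card) := by
            rw [Nat.even_iff]
            omega
          rw [(cast0 _).mpr this, mul_zero]
      · rw [if_neg hw0X, mul_zero]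
        symm
        refine Finset.sum_eq_zero fun u hu => ?_
        refine if_neg fun hh => ?_
        have : w0 ∈ σ.erase u := mem_erase.mpr ⟨fun h => hh.1 h.symm, hw0σ⟩
        rw [← hh.2] at this
        exact hw0X (mem_inter.mp this).2
    · -- |σ ∩ Y| small: both sides zero
      have hYc3 : (σ ∩ Y).card ≠ 3 := by
        intro h
        have : σ ∩ Y = σ := eq_of_subset_of_card_le inter_subset_left (by omega)
        exact hYσ (fun x hx => (mem_inter.mp (this.symm ▸ hx)).2)
      have hYle : (σ ∩ Y).card ≤ 3 := hσ ▸ card_le_card inter_subset_left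
      have hLHS : (∑ u ∈ σ, (if u ∈ X then (1:ZMod 2) else 0) * (if σ.erase u ⊆ Y then 1 else 0)) = 0 := by
        refine Finset.sum_eq_zero fun u hu => ?_
        have : ¬(σ.erase u ⊆ Y) := by
          intro h
          have hsub2 : σ.erase u ⊆ σ ∩ Y := subset_inter (erase_subset u σ) h
          have := card_le_card hsub2
          rw [hcard_eraseσ u hu] at this
          omega
        rw [if_neg this, mul_zero]
      have hRHS : (∑ u ∈ σ, ∑ w ∈ σ,
            if u ≠ w ∧ σ ∩ X = σ.erase u ∧ σ ∩ Y = σ.erase w then (1:ZMod 2) else 0) = 0 := by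
        refine Finset.sum_eq_zero fun u hu => Finset.sum_eq_zero fun w hw => ?_
        refine if_neg fun hh => hc ?_
        rw [hh.2.2, hcard_eraseσ w hw]
      rw [hLHS, hRHS, mul_zero]



variable {V : Type} [DecidableEq V]

lemma ite_nest4 (A B C D E : Prop) [Decidable A] [Decidable B] [Decidable C] [Decidable D]
    [Decidable E] :
    (if (A ∧ B ∧ C ∧ D) ∧ E then (1:ZMod 2) else 0)
      = if A ∧ B ∧ C then (if D ∧ E then (1:ZMod 2) else 0) else 0 := by
  by_cases h1 : A ∧ B ∧ C
  · by_cases h2 : D ∧ E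
    · rw [if_pos ⟨⟨h1.1, h1.2.1, h1.2.2, h2.1⟩, h2.2⟩, if_pos h1, if_pos h2]
    · rw [if_neg, if_pos h1, if_neg h2]
      rintro ⟨⟨-, -, -, hD⟩, hE⟩
      exact h2 ⟨hD, hE⟩
  · rw [if_neg, if_neg h1]
    rintro ⟨⟨hA, hB, hC, -⟩, -⟩
    exact h1 ⟨hA, hB, hC⟩

lemma conv_quad {m : ℕ} (t : Fin m → Finset V) (T : ℕ → Finset V)
    (hTt : ∀ a : Fin m, t a = T a.val) (σ : Finset V) :
    ((((quadSet t).filter fun p => σ ⊆ etaSimp t p).card : ZMod 2))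
      = ∑ l ∈ Finset.range m, ∑ k ∈ Finset.range l, ∑ j ∈ Finset.range k, ∑ i ∈ Finset.range j,
          (if (T i ∩ T k ∪ T j ∩ T l).card = 4 ∧ σ ⊆ T i ∩ T k ∪ T j ∩ T l
            then (1:ZMod 2) else 0) := by
  rw [← nest4]
  unfold quadSet etaSimp
  rw [Finset.filter_filter, Finset.card_filter, Nat.cast_sum]
  simp only [Fintype.sum_prod_type]
  simp only [Nat.cast_ite, Nat.cast_one, Nat.cast_zero]
  simp only [hTt, Fin.lt_def]
  rw [Fin.sum_univ_eq_sum_range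
    (fun i => ∑ j : Fin m, ∑ k : Fin m, ∑ l : Fin m,
      if (i < j.val ∧ j.val < k.val ∧ k.val < l.val ∧
            (T i ∩ T k.val ∪ T j.val ∩ T l.val).card = 4) ∧
          σ ⊆ T i ∩ T k.val ∪ T j.val ∩ T l.val then (1:ZMod 2) else 0) m]
  refine Finset.sum_congr rfl fun i _ => ?_
  rw [Fin.sum_univ_eq_sum_range
    (fun j => ∑ k : Fin m, ∑ l : Fin m,
      if (i < j ∧ j < k.val ∧ k.val < l.val ∧
            (T i ∩ T k.val ∪ T j ∩ T l.val).card = 4) ∧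
          σ ⊆ T i ∩ T k.val ∪ T j ∩ T l.val then (1:ZMod 2) else 0) m]
  refine Finset.sum_congr rfl fun j _ => ?_
  rw [Fin.sum_univ_eq_sum_range
    (fun k => ∑ l : Fin m,
      if (i < j ∧ j < k ∧ k < l.val ∧
            (T i ∩ T k ∪ T j ∩ T l.val).card = 4) ∧
          σ ⊆ T i ∩ T k ∪ T j ∩ T l.val then (1:ZMod 2) else 0) m]
  refine Finset.sum_congr rfl fun k _ => ?_
  rw [Fin.sum_univ_eq_sum_range
    (fun l =>
      if (i < j ∧ j < k ∧ k < l ∧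
            (T i ∩ T k ∪ T j ∩ T l).card = 4) ∧
          σ ⊆ T i ∩ T k ∪ T j ∩ T l then (1:ZMod 2) else 0) m]
  refine Finset.sum_congr rfl fun l _ => ?_
  exact ite_nest4 _ _ _ _ _



lemma nested4eq (n : ℕ) (f g h e : ℕ → ZMod 2) :
    (∑ l ∈ Finset.range n, ∑ k ∈ Finset.range l, ∑ j ∈ Finset.range k, ∑ i ∈ Finset.range j,
        f i * g j * h k * e l) = S4 n f g h e := by
  simp only [S4, S3, S2, S1, Finset.sum_mul, mul_assoc]

lemma nested2eq (n : ℕ) (f g : ℕ → ZMod 2) :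
    (∑ b ∈ Finset.range n, ∑ a ∈ Finset.range b, f a * g b) = S2 n f g := by
  simp only [S2, S1, Finset.sum_mul]

lemma swap2lvl {γ : Type} (m : ℕ) (D : Finset γ) (F : ℕ → ℕ → γ → ZMod 2) :
    (∑ b ∈ Finset.range m, ∑ a ∈ Finset.range b, ∑ z ∈ D, F b a z)
      = ∑ z ∈ D, ∑ b ∈ Finset.range m, ∑ a ∈ Finset.range b, F b a z := by
  calc (∑ b ∈ Finset.range m, ∑ a ∈ Finset.range b, ∑ z ∈ D, F b a z)
      = ∑ b ∈ Finset.range m, ∑ z ∈ D, ∑ a ∈ Finset.range b, F b a z :=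
        Finset.sum_congr rfl fun b _ => Finset.sum_comm
    _ = ∑ z ∈ D, ∑ b ∈ Finset.range m, ∑ a ∈ Finset.range b, F b a z := Finset.sum_comm

lemma swap_nest4 {γ : Type} (m : ℕ) (D : Finset γ) (F : ℕ → ℕ → ℕ → ℕ → γ → ZMod 2) :
    (∑ l ∈ Finset.range m, ∑ k ∈ Finset.range l, ∑ j ∈ Finset.range k, ∑ i ∈ Finset.range j,
        ∑ z ∈ D, F l k j i z)
      = ∑ z ∈ D, ∑ l ∈ Finset.range m, ∑ k ∈ Finset.range l, ∑ j ∈ Finset.range k,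
          ∑ i ∈ Finset.range j, F l k j i z := by
  calc (∑ l ∈ Finset.range m, ∑ k ∈ Finset.range l, ∑ j ∈ Finset.range k, ∑ i ∈ Finset.range j,
        ∑ z ∈ D, F l k j i z)
      = ∑ l ∈ Finset.range m, ∑ k ∈ Finset.range l, ∑ j ∈ Finset.range k, ∑ z ∈ D,
          ∑ i ∈ Finset.range j, F l k j i z :=
        Finset.sum_congr rfl fun l _ => Finset.sum_congr rfl fun k _ =>
          Finset.sum_congr rfl fun j _ => Finset.sum_comm
    _ = ∑ l ∈ Finset.range m, ∑ k ∈ Finset.range l, ∑ z ∈ D, ∑ j ∈ Finset.range k,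
          ∑ i ∈ Finset.range j, F l k j i z :=
        Finset.sum_congr rfl fun l _ => Finset.sum_congr rfl fun k _ => Finset.sum_comm
    _ = ∑ l ∈ Finset.range m, ∑ z ∈ D, ∑ k ∈ Finset.range l, ∑ j ∈ Finset.range k,
          ∑ i ∈ Finset.range j, F l k j i z :=
        Finset.sum_congr rfl fun l _ => Finset.sum_comm
    _ = ∑ z ∈ D, ∑ l ∈ Finset.range m, ∑ k ∈ Finset.range l, ∑ j ∈ Finset.range k,
          ∑ i ∈ Finset.range j, F l k j i z := Finset.sum_comm

lemma indicator_convert (σ : Finset V) (hσ : σ.card = 3) (u v : V) (huv : u ≠ v) (hu : u ∈ σ)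
    (Xi Xj Xk Xl : Finset V) (hi : Xi.card = 3) (hj : Xj.card = 3) (hk : Xk.card = 3)
    (hl : Xl.card = 3) (hik : Xi ≠ Xk) (hjl : Xj ≠ Xl) :
    (if Xi ∩ Xk = insert u {v} ∧ Xj ∩ Xl = σ.erase u then (1:ZMod 2) else 0)
      = (if insert u {v} ⊆ Xi then 1 else 0) * (if σ.erase u ⊆ Xj then 1 else 0) *
          (if insert u {v} ⊆ Xk then 1 else 0) * (if σ.erase u ⊆ Xl then 1 else 0) := by
  rw [ib_mul, ib_mul, ib_mul]
  refine if_congr ?_ rfl rfl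
  rw [← pair_eq_inter Xi Xk hi hk hik u v huv, ← erase_eq_inter σ Xj Xl hσ hj hl hjl u hu]
  tauto



lemma keylemma {m : ℕ} (t : Fin m → Finset V) (hinj : Function.Injective t)
    (hcard : ∀ i, (t i).card = 3)
    (hcycE : ∀ e : Finset V, e.card = 2 → Even ((Finset.univ.filter fun a => e ⊆ t a).card))
    (σ : Finset V) (hσ3 : σ.card = 3) :
    ((((quadSet t).filter fun p => σ ⊆ etaSimp t p).card : ZMod 2))
      = if σ ∈ Finset.univ.image t then 1 else 0 := by
  set W := Finset.univ.sup t with hWdef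
  set T : ℕ → Finset V := fun x => if h : x < m then t ⟨x, h⟩ else ∅ with hTdef
  have hTt : ∀ a : Fin m, t a = T a.val := fun a => by simp [hTdef]
  have hT3 : ∀ x, x < m → (T x).card = 3 := fun x hx => by
    simp only [hTdef, dif_pos hx]; exact hcard _
  have hTle : ∀ x, (T x).card ≤ 3 := fun x => by
    by_cases hx : x < m
    · exact (hT3 x hx).le
    · simp [hTdef, hx]
  have hTne : ∀ x y, x < m → y < m → x ≠ y → T x ≠ T y := by
    intro x y hx hy hne
    simp only [hTdef, dif_pos hx, dif_pos hy]
    intro h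
    exact hne (Fin.mk.injEq x hx y hy ▸ congrArg Fin.val (hinj h))
  have hTW : ∀ x, x < m → T x ⊆ W := by
    intro x hx
    simp only [hTdef, dif_pos hx]
    exact Finset.le_sup (f := t) (Finset.mem_univ _)
  have hcyc : ∀ e : Finset V, e.card = 2 →
      (∑ x ∈ Finset.range m, if e ⊆ T x then (1:ZMod 2) else 0) = 0 := by
    intro e he
    have hconv : (∑ x ∈ Finset.range m, if e ⊆ T x then (1:ZMod 2) else 0)
        = ((Finset.univ.filter fun a : Fin m => e ⊆ t a).card : ZMod 2) := by
      rw [Finset.card_filter, Nat.cast_sum,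
        ← Fin.sum_univ_eq_sum_range (fun x => if e ⊆ T x then (1:ZMod 2) else 0) m]
      refine Finset.sum_congr rfl fun a _ => ?_
      rw [hTt a]
      simp
    rw [hconv]
    exact (cast0 _).mpr (hcycE e he)
  -- the indicator families
  set F : V → ℕ → ZMod 2 := fun u x => if σ ∩ T x = σ.erase u then 1 else 0 with hFdef
  set A : V → V → ℕ → ZMod 2 := fun u v x => if insert u {v} ⊆ T x then 1 else 0 with hAdef
  set B : V → ℕ → ZMod 2 := fun u x => if σ.erase u ⊆ T x then 1 else 0 with hBdef
  have hεcand : ∀ u ∈ σ, S1 m (F u) = (if σ ∈ Finset.univ.image t then 1 else 0) := by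
    intro u hu
    have herase2 : (σ.erase u).card = 2 := by rw [Finset.card_erase_of_mem hu, hσ3]
    have hcu := hcyc (σ.erase u) herase2
    have hpt : ∀ x ∈ Finset.range m,
        (if σ.erase u ⊆ T x then (1:ZMod 2) else 0)
          = F u x + (if T x = σ then 1 else 0) := by
      intro x hx
      have hX3 := hT3 x (Finset.mem_range.mp hx)
      simp only [hFdef]
      by_cases h1 : σ.erase u ⊆ T x
      · by_cases h2 : u ∈ T x
        · have hσX : σ ⊆ T x := by
            intro y hy
            by_cases hyu : y = u
            · exact hyu ▸ h2
            · exact h1 (Finset.mem_erase.mpr ⟨hyu, hy⟩)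
          have hXσ : T x = σ := (Finset.eq_of_subset_of_card_le hσX (by omega)).symm
          rw [if_pos h1, if_pos hXσ, if_neg, zero_add]
          rw [hXσ, Finset.inter_self]
          intro h
          have hcc := congrArg Finset.card h
          rw [hσ3, herase2] at hcc
          omega
        · have hint : σ ∩ T x = σ.erase u := by
            apply Finset.Subset.antisymm
            · intro y hy
              exact Finset.mem_erase.mpr ⟨fun hyu => h2 (hyu ▸ (Finset.mem_inter.mp hy).2),
                (Finset.mem_inter.mp hy).1⟩
            · exact Finset.subset_inter (Finset.erase_subset u σ) h1
          rw [if_pos h1, if_pos hint, if_neg, add_zero]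
          intro h
          exact h2 (h ▸ hu)
      · rw [if_neg h1, if_neg, if_neg, add_zero]
        · intro h
          exact h1 (h ▸ (Finset.erase_subset u σ))
        · intro h
          exact h1 (h ▸ Finset.inter_subset_right)
    rw [Finset.sum_congr rfl hpt, Finset.sum_add_distrib] at hcu
    have himgsum : (∑ x ∈ Finset.range m, if T x = σ then (1:ZMod 2) else 0)
        = (if σ ∈ Finset.univ.image t then 1 else 0) := by
      by_cases himg : σ ∈ Finset.univ.image t
      · obtain ⟨a0, -, ha0⟩ := Finset.mem_image.mp himg
        rw [if_pos himg]
        rw [Finset.sum_eq_single_of_mem a0.val (Finset.mem_range.mpr a0.isLt)]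
        · rw [if_pos]
          rw [← hTt a0, ha0]
        · intro x hx hne
          refine if_neg fun h => hne ?_
          have hxm := Finset.mem_range.mp hx
          have : T x = T a0.val := by rw [h, ← hTt a0, ha0]
          by_contra hne2
          exact hTne x a0.val hxm a0.isLt hne2 this
      · rw [if_neg himg]
        refine Finset.sum_eq_zero fun x hx => ?_
        refine if_neg fun h => himg ?_
        refine Finset.mem_image.mpr ⟨⟨x, Finset.mem_range.mp hx⟩, Finset.mem_univ _, ?_⟩
        rw [hTt ⟨x, Finset.mem_range.mp hx⟩]
        exact h
    rw [himgsum] at hcu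
    have : S1 m (F u) = ∑ x ∈ Finset.range m, F u x := rfl
    rw [this]
    linear_combination hcu - (if σ ∈ Finset.univ.image t then (1:ZMod 2) else 0) * htwo
  have hdF : ∀ u w, u ∈ σ → w ∈ σ → u ≠ w → ∀ x, F u x * F w x = 0 := by
    intro u w hu hw hne x
    simp only [hFdef]
    by_cases c1 : σ ∩ T x = σ.erase u
    · rw [if_pos c1, one_mul]
      refine if_neg fun c2 => hne ?_
      exact (erase_eq_erase_iff σ u w hu).mp (c1 ▸ c2)
    · rw [if_neg c1, zero_mul]
  have hdAB : ∀ u v, u ∈ σ → v ∉ σ → ∀ x, A u v x * B u x = 0 := by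
    intro u v hu hv x
    simp only [hAdef, hBdef]
    by_cases c1 : insert u {v} ⊆ T x
    · rw [if_pos c1, one_mul]
      refine if_neg fun c2 => ?_
      have hsub : insert v σ ⊆ T x := by
        intro y hy
        rcases Finset.mem_insert.mp hy with rfl | hyσ
        · exact c1 (Finset.mem_insert_of_mem (Finset.mem_singleton_self y))
        · by_cases hyu : y = u
          · exact c1 (hyu ▸ Finset.mem_insert_self u {v})
          · exact c2 (Finset.mem_erase.mpr ⟨hyu, hyσ⟩)
      have hc4 : (insert v σ).card = 4 := by rw [Finset.card_insert_of_notMem hv, hσ3]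
      have hle1 := Finset.card_le_card hsub
      have hle2 := hTle x
      omega
    · rw [if_neg c1, zero_mul]
  have hAcyc : ∀ u v, u ∈ σ → v ∉ σ → S1 m (A u v) = 0 := by
    intro u v hu hv
    exact hcyc (insert u {v}) (Finset.card_pair (fun h => hv (h ▸ hu)))
  have hBcyc : ∀ u, u ∈ σ → S1 m (B u) = 0 := fun u hu =>
    hcyc (σ.erase u) (by rw [Finset.card_erase_of_mem hu, hσ3])
  rw [conv_quad t T hTt σ]
  calc (∑ l ∈ Finset.range m, ∑ k ∈ Finset.range l, ∑ j ∈ Finset.range k,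
          ∑ i ∈ Finset.range j,
          if (T i ∩ T k ∪ T j ∩ T l).card = 4 ∧ σ ⊆ T i ∩ T k ∪ T j ∩ T l
            then (1:ZMod 2) else 0)
      = ∑ l ∈ Finset.range m, ∑ k ∈ Finset.range l, ∑ j ∈ Finset.range k,
          ∑ i ∈ Finset.range j, ∑ z ∈ σ ×ˢ (W \ σ),
          (A z.1 z.2 i * B z.1 j * A z.1 z.2 k * B z.1 l
            + B z.1 i * A z.1 z.2 j * B z.1 k * A z.1 z.2 l) := by
        refine Finset.sum_congr rfl fun l hl => Finset.sum_congr rfl fun k hk =>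
          Finset.sum_congr rfl fun j hj => Finset.sum_congr rfl fun i hi => ?_
        have hlm := Finset.mem_range.mp hl
        have hkl := Finset.mem_range.mp hk
        have hjk := Finset.mem_range.mp hj
        have hij := Finset.mem_range.mp hi
        have hkm : k < m := lt_trans hkl hlm
        have hjm : j < m := lt_trans hjk hkm
        have him : i < m := lt_trans hij hjm
        have hik : i ≠ k := by omega
        have hjl : j ≠ l := by omega
        refine (pointwise_expand σ W (T i) (T j) (T k) (T l) hσ3 (hT3 i him) (hT3 j hjm)
          (hT3 k hkm) (hT3 l hlm) (hTne i k him hkm hik) (hTne j l hjm hlm hjl)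
          (hTW i him) (hTW j hjm)).trans ?_
        refine Eq.trans ?_ (Finset.sum_product' σ (W \ σ)
          (fun u v => (A u v i * B u j * A u v k * B u l
            + B u i * A u v j * B u k * A u v l))).symm
        refine Finset.sum_congr rfl fun u hu => Finset.sum_congr rfl fun v hv => ?_
        have hvσ : v ∉ σ := (Finset.mem_sdiff.mp hv).2
        have huv : u ≠ v := fun h => hvσ (h ▸ hu)
        rw [indicator_convert σ hσ3 u v huv hu (T i) (T j) (T k) (T l) (hT3 i him)
            (hT3 j hjm) (hT3 k hkm) (hT3 l hlm) (hTne i k him hkm hik) (hTne j l hjm hlm hjl),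
          indicator_convert σ hσ3 u v huv hu (T j) (T i) (T l) (T k) (hT3 j hjm)
            (hT3 i him) (hT3 l hlm) (hT3 k hkm) (hTne j l hjm hlm hjl) (hTne i k him hkm hik)]
        simp only [hAdef, hBdef]
        ring
    _ = ∑ z ∈ σ ×ˢ (W \ σ), ∑ l ∈ Finset.range m, ∑ k ∈ Finset.range l,
          ∑ j ∈ Finset.range k, ∑ i ∈ Finset.range j,
          (A z.1 z.2 i * B z.1 j * A z.1 z.2 k * B z.1 l
            + B z.1 i * A z.1 z.2 j * B z.1 k * A z.1 z.2 l) :=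
        swap_nest4 m (σ ×ˢ (W \ σ)) _
    _ = ∑ z ∈ σ ×ˢ (W \ σ), S2 m (A z.1 z.2) (B z.1) := by
        refine Finset.sum_congr rfl fun z hz => ?_
        have hz1 : z.1 ∈ σ := (Finset.mem_product.mp hz).1
        have hz2 : z.2 ∉ σ := (Finset.mem_sdiff.mp (Finset.mem_product.mp hz).2).2
        rw [show (∑ l ∈ Finset.range m, ∑ k ∈ Finset.range l, ∑ j ∈ Finset.range k,
            ∑ i ∈ Finset.range j,
            (A z.1 z.2 i * B z.1 j * A z.1 z.2 k * B z.1 l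
              + B z.1 i * A z.1 z.2 j * B z.1 k * A z.1 z.2 l))
          = S4 m (A z.1 z.2) (B z.1) (A z.1 z.2) (B z.1)
            + S4 m (B z.1) (A z.1 z.2) (B z.1) (A z.1 z.2) from by
            rw [← nested4eq, ← nested4eq, ← Finset.sum_add_distrib]
            refine Finset.sum_congr rfl fun l _ => ?_
            rw [← Finset.sum_add_distrib]
            refine Finset.sum_congr rfl fun k _ => ?_
            rw [← Finset.sum_add_distrib]
            refine Finset.sum_congr rfl fun j _ => ?_
            rw [← Finset.sum_add_distrib]]
        exact lemmaX (A z.1 z.2) (B z.1) (hdAB z.1 z.2 hz1 hz2) m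
          (hAcyc z.1 z.2 hz1 hz2) (hBcyc z.1 hz1)
    _ = ∑ z ∈ σ ×ˢ (W \ σ), ∑ b ∈ Finset.range m, ∑ a ∈ Finset.range b,
          A z.1 z.2 a * B z.1 b :=
        Finset.sum_congr rfl fun z _ => (nested2eq m _ _).symm
    _ = ∑ b ∈ Finset.range m, ∑ a ∈ Finset.range b, ∑ z ∈ σ ×ˢ (W \ σ),
          A z.1 z.2 a * B z.1 b := (swap2lvl m _ _).symm
    _ = ∑ b ∈ Finset.range m, ∑ a ∈ Finset.range b, ∑ z ∈ σ ×ˢ σ,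
          (if z.1 ≠ z.2 then (1:ZMod 2) else 0) * (F z.1 a * F z.2 b) := by
        refine Finset.sum_congr rfl fun b hb => Finset.sum_congr rfl fun a ha => ?_
        have hbm := Finset.mem_range.mp hb
        have hab := Finset.mem_range.mp ha
        have ham : a < m := lt_trans hab hbm
        rw [Finset.sum_product' (σ) (W \ σ) (fun u v => A u v a * B u b),
          Finset.sum_product' σ σ (fun u w => (if u ≠ w then (1:ZMod 2) else 0) * (F u a * F w b))]
        calc (∑ u ∈ σ, ∑ v ∈ W \ σ, A u v a * B u b)
            = ∑ u ∈ σ, ((if u ∈ T a then (1:ZMod 2) else 0) * (if σ.erase u ⊆ T b then 1 else 0))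
                * ((T a \ σ).card : ZMod 2) := by
              refine Finset.sum_congr rfl fun u hu => ?_
              have hA1 : ∀ v, A u v a = (if u ∈ T a then (1:ZMod 2) else 0) *
                  (if v ∈ T a then 1 else 0) := by
                intro v
                simp only [hAdef]
                rw [ib_mul]
                refine if_congr ?_ rfl rfl
                rw [Finset.insert_subset_iff, Finset.singleton_subset_iff]
              calc (∑ v ∈ W \ σ, A u v a * B u b)
                  = ∑ v ∈ W \ σ, ((if u ∈ T a then (1:ZMod 2) else 0)
                      * (if σ.erase u ⊆ T b then 1 else 0)) * (if v ∈ T a then 1 else 0) := by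
                    refine Finset.sum_congr rfl fun v _ => ?_
                    rw [hA1 v]
                    simp only [hBdef]
                    ring
                _ = ((if u ∈ T a then (1:ZMod 2) else 0) * (if σ.erase u ⊆ T b then 1 else 0))
                      * ∑ v ∈ W \ σ, (if v ∈ T a then 1 else 0) := by
                    rw [Finset.mul_sum]
                _ = ((if u ∈ T a then (1:ZMod 2) else 0) * (if σ.erase u ⊆ T b then 1 else 0))
                      * ((T a \ σ).card : ZMod 2) := by
                    rw [sum_indicator_inter]
                    have hset : (W \ σ) ∩ T a = T a \ σ := by
                      ext y
                      simp only [Finset.mem_inter, Finset.mem_sdiff]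
                      constructor
                      · rintro ⟨⟨hyW, hyσ⟩, hyT⟩
                        exact ⟨hyT, hyσ⟩
                      · rintro ⟨hyT, hyσ⟩
                        exact ⟨⟨hTW a ham hyT, hyσ⟩, hyT⟩
                    rw [hset]
          _ = ((T a \ σ).card : ZMod 2) *
                ∑ u ∈ σ, (if u ∈ T a then (1:ZMod 2) else 0) * (if σ.erase u ⊆ T b then 1 else 0) := by
              rw [Finset.mul_sum]
              refine Finset.sum_congr rfl fun u _ => ?_
              ring
          _ = ∑ u ∈ σ, ∑ w ∈ σ,
                (if u ≠ w ∧ σ ∩ T a = σ.erase u ∧ σ ∩ T b = σ.erase w then (1:ZMod 2) else 0) :=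
              step2 σ (T a) (T b) hσ3 (hT3 a ham)
          _ = ∑ u ∈ σ, ∑ w ∈ σ, (if u ≠ w then (1:ZMod 2) else 0) * (F u a * F w b) := by
              refine Finset.sum_congr rfl fun u _ => Finset.sum_congr rfl fun w _ => ?_
              simp only [hFdef]
              rw [ib_mul, ib_mul]
    _ = ∑ z ∈ σ ×ˢ σ, ∑ b ∈ Finset.range m, ∑ a ∈ Finset.range b,
          (if z.1 ≠ z.2 then (1:ZMod 2) else 0) * (F z.1 a * F z.2 b) := swap2lvl m _ _
    _ = ∑ z ∈ σ ×ˢ σ, (if z.1 ≠ z.2 then (1:ZMod 2) else 0) * S2 m (F z.1) (F z.2) := by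
        refine Finset.sum_congr rfl fun z _ => ?_
        rw [← nested2eq, Finset.mul_sum]
        refine Finset.sum_congr rfl fun b _ => ?_
        rw [Finset.mul_sum]
    _ = ∑ u ∈ σ, ∑ w ∈ σ, (if u ≠ w then (1:ZMod 2) else 0) * S2 m (F u) (F w) :=
        Finset.sum_product' σ σ (fun u w => (if u ≠ w then (1:ZMod 2) else 0) * S2 m (F u) (F w))
    _ = if σ ∈ Finset.univ.image t then 1 else 0 := by
        obtain ⟨p, q, r, hpq, hpr, hqr, hσ⟩ := Finset.card_eq_three.mp hσ3
        have hpσ : p ∈ σ := by rw [hσ]; simp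
        have hqσ : q ∈ σ := by rw [hσ]; simp
        have hrσ : r ∈ σ := by rw [hσ]; simp
        have hsum3 : ∀ g : V → ZMod 2, (∑ x ∈ σ, g x) = g p + g q + g r := by
          intro g
          rw [hσ]
          rw [show ({p, q, r} : Finset V) = insert p (insert q {r}) from rfl]
          rw [Finset.sum_insert (by simp [hpq, hpr]), Finset.sum_insert (by simp [hqr]),
            Finset.sum_singleton, add_assoc]
        simp only [hsum3]
        have hdiag : ∀ x : V, (if x ≠ x then (1:ZMod 2) else 0) = 0 :=
          fun x => if_neg (fun h => h rfl)
        have hoff : ∀ x y : V, x ≠ y → (if x ≠ y then (1:ZMod 2) else 0) = 1 :=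
          fun x y h => if_pos h
        rw [hdiag p, hdiag q, hdiag r, hoff p q hpq, hoff p r hpr, hoff q r hqr,
          hoff q p (Ne.symm hpq), hoff r p (Ne.symm hpr), hoff r q (Ne.symm hqr)]
        have e1 := idA (F p) (F q) (fun x => hdF p q hpσ hqσ hpq x) m
        have e2 := idA (F p) (F r) (fun x => hdF p r hpσ hrσ hpr x) m
        have e3 := idA (F q) (F r) (fun x => hdF q r hqσ hrσ hqr x) m
        rw [hεcand p hpσ] at e1 e2
        rw [hεcand q hqσ] at e1 e3
        rw [hεcand r hrσ] at e2 e3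
        by_cases himg : σ ∈ Finset.univ.image t
        · rw [if_pos himg] at e1 e2 e3 ⊢
          linear_combination e1 + e2 + e3 + htwo
        · rw [if_neg himg] at e1 e2 e3 ⊢
          linear_combination e1 + e2 + e3



lemma bdry_mem_iff (c : Finset (Finset V)) (σ : Finset V) :
    σ ∈ bdry c ↔ Odd ((c.filter fun η => σ ⊆ η ∧ σ.card + 1 = η.card).card) := by
  unfold bdry
  rw [Finset.mem_filter]
  constructor
  · exact And.right
  · intro h
    refine ⟨?_, h⟩
    have hpos : 0 < ((c.filter fun η => σ ⊆ η ∧ σ.card + 1 = η.card).card) := by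
      rcases h with ⟨k, hk⟩; omega
    obtain ⟨η, hη⟩ := Finset.card_pos.mp hpos
    have hm := Finset.mem_filter.mp hη
    exact Finset.mem_sup.mpr ⟨η, hm.1, Finset.mem_powerset.mpr hm.2.1⟩

lemma Tchain_card4 {m : ℕ} (t : Fin m → Finset V) :
    ∀ η ∈ Tchain t, η.card = 4 := by
  intro η hη
  have h1 := (Finset.mem_filter.mp hη).1
  obtain ⟨p, hp, hpe⟩ := Finset.mem_image.mp h1
  have h2 := (Finset.mem_filter.mp hp).2
  rw [← hpe]
  exact h2.2.2.2

lemma castparity (n : ℕ) : ((n : ZMod 2)) = if Odd n then 1 else 0 := by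
  by_cases h : Odd n
  · rw [if_pos h]; exact (cast1 n).mpr h
  · rw [if_neg h]
    rcases Nat.even_or_odd n with he | ho
    · exact (cast0 n).mpr he
    · exact absurd ho h

lemma bridge2 {m : ℕ} (t : Fin m → Finset V) (σ : Finset V) (hσ3 : σ.card = 3) :
    ((((Tchain t).filter fun η => σ ⊆ η ∧ σ.card + 1 = η.card).card : ZMod 2))
      = ((((quadSet t).filter fun p => σ ⊆ etaSimp t p).card : ZMod 2)) := by
  have hfc : ((Tchain t).filter fun η => σ ⊆ η ∧ σ.card + 1 = η.card)
      = (Tchain t).filter fun η => σ ⊆ η := by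
    refine Finset.filter_congr fun η hη => ?_
    rw [hσ3, Tchain_card4 t η hη]
    simp
  rw [hfc]
  have hfib : (((quadSet t).filter fun p => σ ⊆ etaSimp t p).card)
      = ∑ η ∈ (quadSet t).image (etaSimp t),
          (((quadSet t).filter fun p => σ ⊆ etaSimp t p).filter
            fun p => etaSimp t p = η).card := by
    refine Finset.card_eq_sum_card_fiberwise fun p hp => ?_
    exact Finset.mem_image_of_mem _ (Finset.mem_filter.mp hp).1
  rw [hfib, Nat.cast_sum]
  unfold Tchain
  rw [Finset.filter_filter, Finset.card_filter, Nat.cast_sum]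
  simp only [Nat.cast_ite, Nat.cast_one, Nat.cast_zero]
  refine Finset.sum_congr rfl fun η hη => ?_
  by_cases hss : σ ⊆ η
  · have hfe : (((quadSet t).filter fun p => σ ⊆ etaSimp t p).filter fun p => etaSimp t p = η)
        = (quadSet t).filter fun p => etaSimp t p = η := by
      rw [Finset.filter_filter]
      refine Finset.filter_congr fun p _ => ?_
      constructor
      · exact And.right
      · intro h
        exact ⟨h ▸ hss, h⟩
    rw [hfe, castparity]
    exact if_congr (and_iff_left hss) rfl rfl
  · have hfe : (((quadSet t).filter fun p => σ ⊆ etaSimp t p).filter fun p => etaSimp t p = η)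
        = ∅ := by
      refine Finset.filter_eq_empty_iff.mpr fun p hp => ?_
      intro h
      exact hss (h ▸ (Finset.mem_filter.mp hp).2)
    rw [hfe, if_neg (fun hh : _ ∧ σ ⊆ η => hss hh.2)]
    simp

end Stmt14Aux

/-- if `τ` is a simplicial 2-cycle over `Z/2`, enumerated without
repetition by `t : Fin m → Finset V` (the linear ordering `≺` being the index order),
then `∂ T_{(τ,≺)} = τ`. -/
theorem stmt14 {V : Type} [DecidableEq V] {m : ℕ} (t : Fin m → Finset V)
    (hinj : Function.Injective t)
    (hcard : ∀ i, (t i).card = 3)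
    (hcycle : bdry (Finset.univ.image t) = ∅) :
    bdry (Tchain t) = Finset.univ.image t := by
  have hcycE : ∀ e : Finset V, e.card = 2 →
      Even ((Finset.univ.filter fun a => e ⊆ t a).card) := by
    intro e he
    by_cases hin : ∃ a : Fin m, e ⊆ t a
    · obtain ⟨a0, ha0⟩ := hin
      have hmem : e ∈ (Finset.univ.image t).sup Finset.powerset :=
        Finset.mem_sup.mpr ⟨t a0, Finset.mem_image_of_mem t (Finset.mem_univ a0),
          Finset.mem_powerset.mpr ha0⟩
      have hni : e ∉ bdry (Finset.univ.image t) := by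
        rw [hcycle]; exact Finset.notMem_empty e
      unfold bdry at hni
      rw [Finset.mem_filter] at hni
      have hnodd : ¬ Odd (((Finset.univ.image t).filter
          fun σ' => e ⊆ σ' ∧ e.card + 1 = σ'.card).card) := fun h => hni ⟨hmem, h⟩
      have hcount : ((Finset.univ.image t).filter fun σ' => e ⊆ σ' ∧ e.card + 1 = σ'.card).card
          = (Finset.univ.filter fun a => e ⊆ t a).card := by
        have h1 : ((Finset.univ.image t).filter fun σ' => e ⊆ σ' ∧ e.card + 1 = σ'.card)
            = (Finset.univ.image t).filter fun σ' => e ⊆ σ' := by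
          refine Finset.filter_congr fun σ' hσ' => ?_
          obtain ⟨a, -, ha⟩ := Finset.mem_image.mp hσ'
          rw [← ha, hcard a, he]
          simp
        rw [h1, Finset.filter_image]
        exact Finset.card_image_of_injective _ hinj
      rw [hcount] at hnodd
      rcases Nat.even_or_odd ((Finset.univ.filter fun a => e ⊆ t a).card) with h | h
      · exact h
      · exact absurd h hnodd
    · push_neg at hin
      have hempty : (Finset.univ.filter fun a : Fin m => e ⊆ t a) = ∅ :=
        Finset.filter_eq_empty_iff.mpr fun {a} _ => hin a
      rw [hempty]
      simp
  ext σ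
  rw [Stmt14Aux.bdry_mem_iff]
  constructor
  · intro hodd
    by_cases hσ3 : σ.card = 3
    · have h1 := Stmt14Aux.bridge2 t σ hσ3
      have h2 := Stmt14Aux.keylemma t hinj hcard hcycE σ hσ3
      rw [h2] at h1
      have h3 := (Stmt14Aux.cast1 _).mpr hodd
      rw [h3] at h1
      by_contra hni
      rw [if_neg hni] at h1
      exact one_ne_zero h1
    · exfalso
      have hempty : ((Tchain t).filter fun η => σ ⊆ η ∧ σ.card + 1 = η.card) = ∅ := by
        refine Finset.filter_eq_empty_iff.mpr fun {η} hη => ?_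
        rintro ⟨-, hc⟩
        rw [Stmt14Aux.Tchain_card4 t η hη] at hc
        omega
      rw [hempty] at hodd
      simp at hodd
  · intro himg
    have hσ3 : σ.card = 3 := by
      obtain ⟨a, -, ha⟩ := Finset.mem_image.mp himg
      rw [← ha]; exact hcard a
    have h1 := Stmt14Aux.bridge2 t σ hσ3
    have h2 := Stmt14Aux.keylemma t hinj hcard hcycE σ hσ3
    rw [h2, if_pos himg] at h1
    exact (Stmt14Aux.cast1 _).mp h1
end

section
/- (Weak colorful Helly for connected covers.) Let F be a connected cover in a graph G with |F| = 20, partitioned as F = A ∪ B ∪ C with |A| = |B| = 5 and |C| = 10, such that A_i ∩ B_j ∩ C_k ≠ ∅ for every choice A_i ∈ A, B_j ∈ B, C_k ∈ C. If no four members of F have a common vertex, then G contains K_5 as a minor. -/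
open Finset

/-- Reduced simplicial Z/2-homology of the complex `K` is nonzero in dimension `d`. -/
def RedHomNonzero {V : Type} [DecidableEq V] (K : Finset (Finset V)) (d : ℕ) : Prop :=
  ∃ c : Finset (Finset V), IsChainOf K d c ∧ bdry c = ∅ ∧
    ∀ b : Finset (Finset V), IsChainOf K (d + 1) b → bdry b ≠ c

/-- The nerve of a finite family of nonempty finite sets. -/
def nerveF {V ι : Type} [DecidableEq V] [Fintype V] [Fintype ι] [DecidableEq ι]
    (F : ι → Finset V) : Finset (Finset ι) :=
  Finset.univ.filter fun σ : Finset ι => σ.Nonempty ∧ (σ.inf F).Nonempty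

/-- `F` is a connected cover in `G`: a family of (vertex sets of) induced subgraphs,
all of whose nonempty intersections induce connected subgraphs. -/
def IsConnCover {V ι : Type} [DecidableEq V] [Fintype V] [Fintype ι] [DecidableEq ι]
    (G : SimpleGraph V) (F : ι → Finset V) : Prop :=
  (∀ i, (F i).Nonempty) ∧
  ∀ σ : Finset ι, σ.Nonempty → (σ.inf F).Nonempty →
    (G.induce ((σ.inf F : Finset V) : Set V)).Connected

/-- The homological dimension of `G` is at least `d`. -/
def GammaGe {V : Type} [DecidableEq V] [Fintype V] (G : SimpleGraph V) (d : ℕ) : Prop :=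
  ∃ (n : ℕ) (F : Fin n → Finset V), IsConnCover G F ∧ RedHomNonzero (nerveF F) d

/-- The homological dimension of `G` equals the integer `m`:
`m` is the greatest `d` with `GammaGe G d` (and `m = -1` when there is none). -/
def HomDimEq {V : Type} [DecidableEq V] [Fintype V] (G : SimpleGraph V) (m : ℤ) : Prop :=
  (∀ d : ℕ, m < (d : ℤ) → ¬ GammaGe G d) ∧ (∀ d : ℕ, (d : ℤ) = m → GammaGe G d)

/-- `H` is a minor of `G`. -/
def IsMinor {W V : Type} [Fintype W] [DecidableEq W] [Fintype V] [DecidableEq V]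
    (H : SimpleGraph W) (G : SimpleGraph V) : Prop :=
  ∃ B : W → Finset V,
    (∀ w, (B w).Nonempty) ∧
    (∀ u w, u ≠ w → Disjoint (B u) (B w)) ∧
    (∀ w, (G.induce ((B w : Finset V) : Set V)).Connected) ∧
    (∀ u w, H.Adj u w → ∃ a ∈ B u, ∃ b ∈ B w, G.Adj a b)

/-!
Write `C_{ij}` (for `i < j`) for `C (edgeIndex i j)`. The branch set of `i` consists of
`A_i ∩ B_i`, the sets `B_i ∩ C_{li}` for `l < i`, and for each `j > i` a connected set
`Y_{ij} ⊆ (A_i ∩ C_{ij}) \ B_j` that meets `A_i ∩ B_i` and has a neighbour in `B_j`. Such a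
`Y_{ij}` exists because `A_i ∩ C_{ij}` is connected and meets both `B_j` and, as no four members
share a vertex, `(A_i ∩ B_i) \ B_j`. Every piece lies in two members and meets `A_i ∩ B_i`, so
branch sets are connected. A vertex shared by pieces of different branch sets would lie in four
members, except for `Y_{ij}` against `B_j ∩ C_{ij}`, which `Y_{ij}` avoids. The neighbour of
`Y_{ij}` in `B_j` lies in `B_j ∩ C_{ij}`, which gives the edge `ij`.
-/

namespace SimpleGraph

variable {V : Type} [DecidableEq V] {G : SimpleGraph V}

theorem exists_connected_subset_sdiff_adj {s t : Finset V} {a b : V}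
    (hs : (G.induce (s : Set V)).Connected) (ha : a ∈ s \ t) (hb : b ∈ s ∩ t) :
    ∃ Y ⊆ s \ t, a ∈ Y ∧ (G.induce (Y : Set V)).Connected ∧
      ∃ y ∈ Y, ∃ z ∈ s ∩ t, G.Adj y z := by
  suffices key : ∀ (x w : (s : Set V)) (p : (G.induce (s : Set V)).Walk x w),
      (x : V) ∉ t → (w : V) ∈ t → ∃ Y ⊆ s \ t, (x : V) ∈ Y ∧
        (G.induce (Y : Set V)).Connected ∧ ∃ y ∈ Y, ∃ z ∈ s ∩ t, G.Adj y z by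
    rw [mem_sdiff] at ha
    rw [mem_inter] at hb
    obtain ⟨p⟩ := hs.preconnected ⟨a, ha.1⟩ ⟨b, hb.1⟩
    exact key _ _ p ha.2 hb.2
  intro x w p
  induction p with
  | nil => exact fun hx hw => absurd hw hx
  | @cons x z w hxz p ih =>
    intro hx hw
    have hxs : (x : V) ∈ s \ t := mem_sdiff.2 ⟨x.2, hx⟩
    by_cases hz : (z : V) ∈ t
    · refine ⟨{(x : V)}, singleton_subset_iff.2 hxs, mem_singleton_self _, ?_,
        x, mem_singleton_self _, z, mem_inter.2 ⟨z.2, hz⟩, hxz⟩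
      rw [coe_singleton, induce_singleton_eq_top]
      exact connected_top
    · obtain ⟨Y, hYst, hzY, hY, y, hyY, hy⟩ := ih hz hw
      refine ⟨insert (x : V) Y, insert_subset hxs hYst, mem_insert_self _ _, ?_,
        y, mem_insert_of_mem hyY, hy⟩
      rw [coe_insert, ← Set.singleton_union]
      exact connected_induce_union (by simp) hY.preconnected rfl hzY hxz

theorem induce_union_biUnion_connected {ι : Type} {c : Finset V} {t : Finset ι}
    {f : ι → Finset V} (hc : (G.induce (c : Set V)).Connected)
    (hf : ∀ j ∈ t, (G.induce (f j : Set V)).Connected ∧ (c ∩ f j).Nonempty) :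
    (G.induce ((c ∪ t.biUnion f : Finset V) : Set V)).Connected := by
  classical
  induction t using Finset.induction with
  | empty => rwa [biUnion_empty, union_empty]
  | @insert j t _ ih =>
    obtain ⟨hfj, v, hv⟩ := hf j (mem_insert_self j t)
    rw [biUnion_insert, union_left_comm, union_comm (f j), coe_union]
    refine induce_union_connected (ih fun k hk => hf k (mem_insert_of_mem hk)).preconnected
      hfj.preconnected ⟨v, ?_, ?_⟩
    · exact mem_coe.2 (mem_union_left _ (mem_inter.1 hv).1)
    · exact mem_coe.2 (mem_inter.1 hv).2

end SimpleGraph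

section FourMembers

variable {V ι : Type} [Fintype V] [DecidableEq V] [DecidableEq ι] {F : ι → Finset V}

theorem false_of_mem_four (h4 : ∀ s : Finset ι, s.card = 4 → s.inf F = ∅) {l : List ι}
    (hl : l.Nodup) (hlen : l.length = 4) {v : V} (hv : ∀ x ∈ l, v ∈ F x) : False := by
  have hsub : {v} ⊆ l.toFinset.inf F :=
    Finset.le_inf fun x hx => singleton_subset_iff.2 (hv x (List.mem_toFinset.1 hx))
  simp [h4 _ ((List.toFinset_card_of_nodup hl).trans hlen)] at hsub

theorem disjoint_of_subset_inter_of_nodup (h4 : ∀ s : Finset ι, s.card = 4 → s.inf F = ∅)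
    (x y x' y' : ι) (hxy : [x, y, x', y'].Nodup) {P Q : Finset V}
    (hP : P ⊆ F x ∩ F y) (hQ : Q ⊆ F x' ∩ F y') : Disjoint P Q := by
  refine disjoint_left.2 fun v hvP hvQ => false_of_mem_four h4 hxy rfl (v := v) ?_
  obtain ⟨hx, hy⟩ := mem_inter.1 (hP hvP)
  obtain ⟨hx', hy'⟩ := mem_inter.1 (hQ hvQ)
  simp [hx, hy, hx', hy']

end FourMembers

theorem IsConnCover.induce_inter_connected {V ι : Type} [DecidableEq V] [Fintype V]
    [Fintype ι] [DecidableEq ι] {G : SimpleGraph V} {F : ι → Finset V}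
    (hF : IsConnCover G F) (x y : ι) (hxy : (F x ∩ F y).Nonempty) :
    (G.induce ((F x ∩ F y : Finset V) : Set V)).Connected := by
  have hinf : ({x, y} : Finset ι).inf F = F x ∩ F y := by simp [inf_insert]
  have h := hF.2 {x, y} (insert_nonempty _ _) (hinf ▸ hxy)
  rwa [hinf] at h

def edgeIndex (i j : Fin 5) : Fin 10 :=
  ⟨(j.val * (j.val - 1) / 2 + i.val) % 10, Nat.mod_lt _ (by norm_num)⟩

theorem edgeIndex_eq_iff_of_lt : ∀ {i j i' j' : Fin 5}, i < j → i' < j' →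
    (edgeIndex i j = edgeIndex i' j' ↔ i = i' ∧ j = j') := by
  decide

section BranchSets

open Sum

variable {V : Type} [DecidableEq V] {G : SimpleGraph V}
  {A B : Fin 5 → Finset V} {C : Fin 10 → Finset V}

structure IsBridge (G : SimpleGraph V) (A B : Fin 5 → Finset V) (C : Fin 10 → Finset V)
    (i j : Fin 5) (Y : Finset V) : Prop where
  subset : Y ⊆ (A i ∩ C (edgeIndex i j)) \ B j
  nonempty_inter : (A i ∩ B i ∩ Y).Nonempty
  connected : (G.induce (Y : Set V)).Connected
  exists_adj : ∃ y ∈ Y, ∃ z ∈ B j ∩ C (edgeIndex i j), G.Adj y z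

theorem exists_isBridge [Fintype V] (hcov : IsConnCover G (Sum.elim A (Sum.elim B C)))
    (hcolor : ∀ i j k, (A i ∩ B j ∩ C k).Nonempty)
    (h4 : ∀ s : Finset (Fin 5 ⊕ Fin 5 ⊕ Fin 10), s.card = 4 →
      s.inf (Sum.elim A (Sum.elim B C)) = ∅) {i j : Fin 5} (hij : i < j) :
    ∃ Y, IsBridge G A B C i j Y := by
  set k := edgeIndex i j
  obtain ⟨a, ha⟩ := hcolor i i k
  obtain ⟨b, hb⟩ := hcolor i j k
  simp only [mem_inter] at ha hb
  have haB : a ∉ B j := fun haB =>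
    false_of_mem_four h4 (l := [inl i, inr (inl i), inr (inl j), inr (inr k)])
      (by simp [hij.ne]) rfl (v := a) (by simp [ha, haB])
  obtain ⟨Y, hYs, haY, hY, y, hyY, z, hz, hyz⟩ :=
    SimpleGraph.exists_connected_subset_sdiff_adj (s := A i ∩ C k) (t := B j)
      (hcov.induce_inter_connected (inl i) (inr (inr k)) ⟨a, mem_inter.2 ⟨ha.1.1, ha.2⟩⟩)
      (mem_sdiff.2 ⟨mem_inter.2 ⟨ha.1.1, ha.2⟩, haB⟩)
      (mem_inter.2 ⟨mem_inter.2 ⟨hb.1.1, hb.2⟩, hb.1.2⟩)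
  simp only [mem_inter] at hz
  exact ⟨Y, hYs, ⟨a, mem_inter.2 ⟨mem_inter.2 ha.1, haY⟩⟩, hY,
    y, hyY, z, mem_inter.2 ⟨hz.2, hz.1.2⟩, hyz⟩

def branchSet (A B : Fin 5 → Finset V) (C : Fin 10 → Finset V)
    (Y : Fin 5 → Fin 5 → Finset V) (i : Fin 5) : Finset V :=
  A i ∩ B i ∪ (Ioi i).biUnion (Y i) ∪ (Iio i).biUnion fun l => B i ∩ C (edgeIndex l i)

variable {Y : Fin 5 → Fin 5 → Finset V}

theorem disjoint_branchSet [Fintype V]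
    (h4 : ∀ s : Finset (Fin 5 ⊕ Fin 5 ⊕ Fin 10), s.card = 4 →
      s.inf (Sum.elim A (Sum.elim B C)) = ∅)
    (hY : ∀ i j, i < j → IsBridge G A B C i j (Y i j)) {u w : Fin 5} (huw : u ≠ w) :
    Disjoint (branchSet A B C Y u) (branchSet A B C Y w) := by
  simp only [branchSet, disjoint_union_left, disjoint_union_right, disjoint_biUnion_left,
    disjoint_biUnion_right, mem_Ioi, mem_Iio]
  have hYA : ∀ i j, i < j → Y i j ⊆ A i ∩ C (edgeIndex i j) :=
    fun i j hij => (hY i j hij).subset.trans sdiff_subset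
  have four := disjoint_of_subset_inter_of_nodup h4
  refine ⟨⟨⟨⟨?_, fun l hl => ?_⟩, fun l hl => ?_⟩,
    fun m hm => ⟨⟨?_, fun l hl => ?_⟩, fun l hl => ?_⟩⟩,
    fun m hm => ⟨⟨?_, fun l hl => ?_⟩, fun l hl => ?_⟩⟩
  · exact four (inl u) (inr (inl u)) (inl w) (inr (inl w)) (by simp [huw]) subset_rfl subset_rfl
  · exact four (inl u) (inr (inr (edgeIndex u l))) (inl w) (inr (inl w)) (by simp [huw])
      (hYA u l hl) subset_rfl
  · exact four (inr (inl u)) (inr (inr (edgeIndex l u))) (inl w) (inr (inl w)) (by simp [huw])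
      subset_rfl subset_rfl
  · exact four (inl u) (inr (inl u)) (inl w) (inr (inr (edgeIndex w m))) (by simp [huw])
      subset_rfl (hYA w m hm)
  · exact four (inl u) (inr (inr (edgeIndex u l))) (inl w) (inr (inr (edgeIndex w m)))
      (by simp [huw, edgeIndex_eq_iff_of_lt hl hm]) (hYA u l hl) (hYA w m hm)
  · rcases eq_or_ne m u with rfl | hmu
    · exact disjoint_of_subset_right (hY _ _ hm).subset
        (disjoint_of_subset_left inter_subset_left disjoint_sdiff)
    · exact four (inr (inl u)) (inr (inr (edgeIndex l u))) (inl w) (inr (inr (edgeIndex w m)))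
        (by simp [edgeIndex_eq_iff_of_lt hl hm, hmu.symm]) subset_rfl (hYA w m hm)
  · exact four (inl u) (inr (inl u)) (inr (inl w)) (inr (inr (edgeIndex m w))) (by simp [huw])
      subset_rfl subset_rfl
  · rcases eq_or_ne l w with rfl | hlw
    · exact disjoint_of_subset_left (hY _ _ hl).subset
        (disjoint_of_subset_right inter_subset_left sdiff_disjoint)
    · exact four (inl u) (inr (inr (edgeIndex u l))) (inr (inl w)) (inr (inr (edgeIndex m w)))
        (by simp [edgeIndex_eq_iff_of_lt hl hm, hlw]) (hYA u l hl) subset_rfl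
  · exact four (inr (inl u)) (inr (inr (edgeIndex l u))) (inr (inl w))
      (inr (inr (edgeIndex m w))) (by simp [huw, edgeIndex_eq_iff_of_lt hl hm])
      subset_rfl subset_rfl

theorem induce_branchSet_connected [Fintype V]
    (hcov : IsConnCover G (Sum.elim A (Sum.elim B C)))
    (hcolor : ∀ i j k, (A i ∩ B j ∩ C k).Nonempty)
    (hY : ∀ i j, i < j → IsBridge G A B C i j (Y i j)) (i : Fin 5) :
    (G.induce (branchSet A B C Y i : Set V)).Connected := by
  have hAB :=
    hcov.induce_inter_connected (inl i) (inr (inl i)) ((hcolor i i 0).mono inter_subset_left)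
  refine SimpleGraph.induce_union_biUnion_connected
    (SimpleGraph.induce_union_biUnion_connected hAB fun l hl =>
      ⟨(hY i l (mem_Ioi.1 hl)).connected, (hY i l (mem_Ioi.1 hl)).nonempty_inter⟩) fun l _ => ?_
  obtain ⟨v, hv⟩ := hcolor i i (edgeIndex l i)
  simp only [mem_inter] at hv
  refine ⟨hcov.induce_inter_connected (inr (inl i)) (inr (inr (edgeIndex l i)))
    ⟨v, mem_inter.2 ⟨hv.1.2, hv.2⟩⟩, v, ?_⟩
  simp [hv]

theorem exists_adj_branchSet (hY : ∀ i j, i < j → IsBridge G A B C i j (Y i j)) {i j : Fin 5}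
    (hij : i < j) : ∃ a ∈ branchSet A B C Y i, ∃ b ∈ branchSet A B C Y j, G.Adj a b := by
  obtain ⟨a, ha, b, hb, hab⟩ := (hY i j hij).exists_adj
  refine ⟨a, ?_, b, ?_, hab⟩
  · exact mem_union_left _ (mem_union_right _ (mem_biUnion.2 ⟨j, mem_Ioi.2 hij, ha⟩))
  · exact mem_union_right _ (mem_biUnion.2 ⟨i, mem_Iio.2 hij, hb⟩)

end BranchSets

theorem stmt17_general {V : Type} [Fintype V] [DecidableEq V] (G : SimpleGraph V)
    (A B : Fin 5 → Finset V) (C : Fin 10 → Finset V)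
    (hcov : IsConnCover G (Sum.elim A (Sum.elim B C)))
    (hcolor : ∀ i j k, (A i ∩ B j ∩ C k).Nonempty)
    (h4 : ∀ s : Finset (Fin 5 ⊕ Fin 5 ⊕ Fin 10), s.card = 4 →
      s.inf (Sum.elim A (Sum.elim B C)) = ∅) :
    IsMinor (⊤ : SimpleGraph (Fin 5)) G := by
  have hbridge : ∀ i j : Fin 5, ∃ Y, i < j → IsBridge G A B C i j Y := fun i j =>
    if hij : i < j then (exists_isBridge hcov hcolor h4 hij).imp fun _ hY _ => hY
    else ⟨∅, fun h => absurd h hij⟩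
  choose Y hY using hbridge
  refine ⟨branchSet A B C Y, fun i => ?_, fun u w huw => disjoint_branchSet h4 hY huw,
    induce_branchSet_connected hcov hcolor hY, fun u w huw => ?_⟩
  · exact ((hcolor i i 0).mono inter_subset_left).mono (subset_union_left.trans subset_union_left)
  · rcases lt_or_gt_of_ne huw.ne with h | h
    · exact exists_adj_branchSet hY h
    · obtain ⟨a, ha, b, hb, hab⟩ := exists_adj_branchSet hY h
      exact ⟨b, hb, a, ha, hab.symm⟩

/-- weak colorful Helly: let `F = A ∪ B ∪ C` be a connected cover in `G`
consisting of 20 distinct members with `|A| = |B| = 5`, `|C| = 10`, such that every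
colorful triple `A_i ∩ B_j ∩ C_k` is nonempty.  If no four members of `F` have a common
vertex, then `G` has a `K₅` minor. -/
theorem stmt17 {V : Type} [Fintype V] [DecidableEq V] (G : SimpleGraph V)
    (A B : Fin 5 → Finset V) (C : Fin 10 → Finset V)
    (hinj : Function.Injective (Sum.elim A (Sum.elim B C)))
    (hcov : IsConnCover G (Sum.elim A (Sum.elim B C)))
    (hcolor : ∀ i j k, (A i ∩ B j ∩ C k).Nonempty)
    (h4 : ∀ s : Finset (Fin 5 ⊕ Fin 5 ⊕ Fin 10), s.card = 4 →
      s.inf (Sum.elim A (Sum.elim B C)) = ∅) :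
    IsMinor (⊤ : SimpleGraph (Fin 5)) G :=
  stmt17_general G A B C hcov hcolor h4
end
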